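/- For every ρ ∈ (0,1) and every integer k ≥ 1, the equilibrium weights satisfy p_k^{(ρ)} ≤ √( ρ · p_{k−1}^{(ρ)} ), and consequently p_k^{(ρ)} ≤ ( ρ(1−ρ) )^{1/2^k}. -/

import Mathlib

/-!
`p_{k+1}` is the positive root `-a/2 + √(a²/4 + ρ p_k)` of a quadratic whose linear coefficient
`a = ρ - 1 + 2 Σ_{ℓ≤k} p_ℓ` is at least `ρ - 1 + 2 p_0 = 1 - ρ ≥ 0`, and for `a ≥ 0` this root is
at most `√(ρ p_k)` by subadditivity of the square root. Iterating `p_{k+1} ≤ √(ρ p_k) ≤ √p_k`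
from `p_1 ≤ √(ρ (1 - ρ))` gives the doubly exponential bound.
-/

open Filter Finset

namespace MullerRatchet15

/-- Auxiliary recursion computing the pair `(p_k, Σ_{ℓ≤k} p_ℓ)` of the equilibrium
type-frequency weights of the tournament ratchet. -/
noncomputable def pAux (ρ : ℝ) : ℕ → ℝ × ℝ
  | 0 => (1 - ρ, 1 - ρ)
  | k+1 =>
    let a := ρ - 1 + 2 * (pAux ρ k).2
    let p := -(1/2) * a + Real.sqrt ((1/4) * a^2 + ρ * (pAux ρ k).1)
    (p, (pAux ρ k).2 + p)

/-- The equilibrium weight `p_k^{(ρ)}`. -/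
noncomputable def pseq (ρ : ℝ) (k : ℕ) : ℝ := (pAux ρ k).1

lemma neg_half_mul_add_sqrt_nonneg (a : ℝ) {c : ℝ} (hc : 0 ≤ c) :
    0 ≤ -(1/2) * a + Real.sqrt ((1/4) * a^2 + c) := by
  have : a / 2 ≤ Real.sqrt ((1/4) * a^2 + c) := Real.le_sqrt_of_sq_le (by nlinarith)
  linarith

lemma neg_half_mul_add_sqrt_le_sqrt {a : ℝ} (ha : 0 ≤ a) (c : ℝ) :
    -(1/2) * a + Real.sqrt ((1/4) * a^2 + c) ≤ Real.sqrt c := by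
  have hsq : Real.sqrt c ^ 2 = max c 0 := Real.sq_sqrt'
  have hc : c ≤ max c 0 := le_max_left c 0
  have : Real.sqrt ((1/4) * a^2 + c) ≤ a / 2 + Real.sqrt c :=
    Real.sqrt_le_iff.mpr ⟨by positivity, by nlinarith [Real.sqrt_nonneg c]⟩
  linarith

section

variable (ρ : ℝ)

lemma pseq_zero : pseq ρ 0 = 1 - ρ := rfl

lemma pseq_succ (k : ℕ) :
    pseq ρ (k + 1) = -(1/2) * (ρ - 1 + 2 * (pAux ρ k).2) +
      Real.sqrt ((1/4) * (ρ - 1 + 2 * (pAux ρ k).2)^2 + ρ * pseq ρ k) := rfl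

lemma pAux_snd_zero : (pAux ρ 0).2 = 1 - ρ := rfl

lemma pAux_snd_succ (k : ℕ) : (pAux ρ (k + 1)).2 = (pAux ρ k).2 + pseq ρ (k + 1) := rfl

variable {ρ} (h0 : 0 ≤ ρ) (h1 : ρ ≤ 1)
include h0 h1

lemma pseq_nonneg (k : ℕ) : 0 ≤ pseq ρ k := by
  induction k with
  | zero => rw [pseq_zero]; linarith
  | succ k ih => rw [pseq_succ]; exact neg_half_mul_add_sqrt_nonneg _ (mul_nonneg h0 ih)

lemma one_sub_le_pAux_snd (k : ℕ) : 1 - ρ ≤ (pAux ρ k).2 := by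
  have hmono : Monotone fun k => (pAux ρ k).2 := monotone_nat_of_le_succ fun k => by
    simp only [pAux_snd_succ, le_add_iff_nonneg_right, pseq_nonneg h0 h1]
  simpa only [pAux_snd_zero] using hmono (Nat.zero_le k)

lemma pseq_succ_le_sqrt (k : ℕ) : pseq ρ (k + 1) ≤ Real.sqrt (ρ * pseq ρ k) := by
  have ha : 0 ≤ ρ - 1 + 2 * (pAux ρ k).2 := by linarith [one_sub_le_pAux_snd h0 h1 k]
  rw [pseq_succ]
  exact neg_half_mul_add_sqrt_le_sqrt ha _

lemma pseq_le_rpow {k : ℕ} (hk : 1 ≤ k) : pseq ρ k ≤ (ρ * (1 - ρ)) ^ (1 / (2:ℝ)^k) := by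
  have hc : 0 ≤ ρ * (1 - ρ) := mul_nonneg h0 (by linarith)
  induction k, hk using Nat.le_induction with
  | base =>
    calc pseq ρ 1 ≤ Real.sqrt (ρ * pseq ρ 0) := pseq_succ_le_sqrt h0 h1 0
      _ = (ρ * (1 - ρ)) ^ (1 / (2:ℝ)^1) := by rw [pseq_zero, Real.sqrt_eq_rpow, pow_one]
  | succ k _ ih =>
    have hp := pseq_nonneg h0 h1 k
    calc pseq ρ (k + 1) ≤ Real.sqrt (ρ * pseq ρ k) := pseq_succ_le_sqrt h0 h1 k
      _ ≤ Real.sqrt (pseq ρ k) := Real.sqrt_le_sqrt (by nlinarith)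
      _ ≤ Real.sqrt ((ρ * (1 - ρ)) ^ (1 / (2:ℝ)^k)) := Real.sqrt_le_sqrt ih
      _ = (ρ * (1 - ρ)) ^ (1 / (2:ℝ)^(k + 1)) := by
        rw [Real.sqrt_eq_rpow, ← Real.rpow_mul hc, pow_succ]
        ring_nf

end

/-- For `ρ ∈ (0,1)` and `k ≥ 1`: `p_k^{(ρ)} ≤ √(ρ p_{k−1}^{(ρ)})`, and consequently
`p_k^{(ρ)} ≤ (ρ(1−ρ))^{1/2^k}`. -/
theorem statement15 (ρ : ℝ) (h0 : 0 < ρ) (h1 : ρ < 1) (k : ℕ) (hk : 1 ≤ k) :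
    pseq ρ k ≤ Real.sqrt (ρ * pseq ρ (k-1)) ∧
    pseq ρ k ≤ (ρ * (1 - ρ)) ^ (1 / (2:ℝ)^k) := by
  obtain ⟨n, rfl⟩ := Nat.exists_eq_add_of_le' hk
  exact ⟨pseq_succ_le_sqrt h0.le h1.le n, pseq_le_rpow h0.le h1.le hk⟩

end MullerRatchet15
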